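/- arXiv:1803.04895 — 3 statements merged into one kernel-verified Lean document; each statement's English description precedes it below -/
import Mathlib

section
/- Let 0 ≤ T* < T and let X : [T*, T] → ℝ^N be twice continuously differentiable with Ẍ(t) = Δ X(t) for all t ∈ (T*, T). If {k₁, …, k_ℓ} is a strategic set of nodes and the components satisfy x_k(t) = 0 for all t ∈ (T*, T) and all k ∈ {k₁, …, k_ℓ}, then X(T) = 0 and Ẋ(T) = 0. (Lemma 2.2) -/
open Matrix Set Polynomial

/-! On `(T*, T)` every observed coordinate `x_k` vanishes, hence so does `x_k'' = (Δ X)_k`; as `Δ X`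
solves the same equation, induction gives `(Δ^j X)_k = 0` for all `j`, hence `(p(Δ) X)_k = 0` for
every polynomial `p`. For the Lagrange polynomial `p` that is `1` at `-ω_m²` and `0` at the other
(distinct) eigenvalues, `p(Δ) X = (v^m ⬝ X) v^m`, so a node `k` with `v^m_k ≠ 0` forces
`v^m ⬝ X = 0`. Thus `X = 0` on `(T*, T)`, hence `Ẋ = 0` there, and both vanish at `T` by
continuity. -/

section Spectral

variable {R ι : Type*} [Fintype ι] [DecidableEq ι]

theorem sum_dotProduct_smul_of_orthonormal [CommRing R] {v : ι → ι → R}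
    (horth : ∀ i j, v i ⬝ᵥ v j = if i = j then 1 else 0) (y : ι → R) :
    ∑ i, (v i ⬝ᵥ y) • v i = y := by
  set V : Matrix ι ι R := Matrix.of v
  have hVVt : V * Vᵀ = 1 := by
    ext i j
    simpa [V, Matrix.mul_apply, Matrix.one_apply, dotProduct] using horth i j
  calc ∑ i, (v i ⬝ᵥ y) • v i = Vᵀ *ᵥ (V *ᵥ y) := by
        rw [← vecMul_transpose, transpose_transpose, vecMul_eq_sum]; rfl
    _ = y := by rw [mulVec_mulVec, mul_eq_one_comm.mp hVVt, one_mulVec]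

theorem aeval_mulVec_of_mulVec_eq_smul [CommRing R] {A : Matrix ι ι R} {x : ι → R} {μ : R}
    (h : A *ᵥ x = μ • x) (p : R[X]) : aeval A p *ᵥ x = p.eval μ • x := by
  induction p using Polynomial.induction_on' with
  | add p q hp hq => rw [map_add, add_mulVec, hp, hq, eval_add, add_smul]
  | monomial j c =>
    have hpow : A ^ j *ᵥ x = μ ^ j • x := by
      induction j with
      | zero => simp
      | succ j ih => rw [pow_succ', ← mulVec_mulVec, ih, mulVec_smul, h, smul_smul, pow_succ]
    rw [aeval_monomial, ← Algebra.smul_def, smul_mulVec, hpow, eval_monomial, smul_smul]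

theorem aeval_mulVec_eq_sum_of_orthonormal_eigenvectors [CommRing R] {A : Matrix ι ι R}
    {v : ι → ι → R} {μ : ι → R}
    (horth : ∀ i j, v i ⬝ᵥ v j = if i = j then 1 else 0) (heig : ∀ i, A *ᵥ v i = μ i • v i)
    (p : R[X]) (y : ι → R) :
    aeval A p *ᵥ y = ∑ i, (p.eval (μ i) * (v i ⬝ᵥ y)) • v i := by
  conv_lhs => rw [← sum_dotProduct_smul_of_orthonormal horth y]
  simp only [mulVec_sum, mulVec_smul, aeval_mulVec_of_mulVec_eq_smul (heig _), smul_smul,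
    mul_comm]

variable [Field R] {A : Matrix ι ι R} {v : ι → ι → R} {μ : ι → R}

theorem aeval_lagrangeBasis_mulVec
    (horth : ∀ i j, v i ⬝ᵥ v j = if i = j then 1 else 0) (heig : ∀ i, A *ᵥ v i = μ i • v i)
    (hμ : Function.Injective μ) (i : ι) (y : ι → R) :
    aeval A (Lagrange.basis Finset.univ μ i) *ᵥ y = (v i ⬝ᵥ y) • v i := by
  rw [aeval_mulVec_eq_sum_of_orthonormal_eigenvectors horth heig, Finset.sum_eq_single i]
  · rw [Lagrange.eval_basis_self hμ.injOn (Finset.mem_univ i), one_mul]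
  · intro j _ hji
    rw [Lagrange.eval_basis_of_ne hji.symm (Finset.mem_univ j), zero_mul, zero_smul]
  · exact fun h => absurd (Finset.mem_univ i) h

theorem eq_zero_of_pow_mulVec_apply_eq_zero
    (horth : ∀ i j, v i ⬝ᵥ v j = if i = j then 1 else 0) (heig : ∀ i, A *ᵥ v i = μ i • v i)
    (hμ : Function.Injective μ) {K : Finset ι} (hK : ∀ i, ∃ k ∈ K, v i k ≠ 0) {y : ι → R}
    (hy : ∀ j : ℕ, ∀ k ∈ K, (A ^ j *ᵥ y) k = 0) : y = 0 := by
  have haeval : ∀ p : R[X], ∀ k ∈ K, (aeval A p *ᵥ y) k = 0 := by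
    intro p k hk
    simp only [aeval_eq_sum_range, sum_mulVec, smul_mulVec, Finset.sum_apply, Pi.smul_apply,
      hy _ k hk, smul_zero, Finset.sum_const_zero]
  have hcoeff : ∀ i, v i ⬝ᵥ y = 0 := by
    intro i
    obtain ⟨k, hk, hvk⟩ := hK i
    have := haeval (Lagrange.basis Finset.univ μ i) k hk
    rw [aeval_lagrangeBasis_mulVec horth heig hμ, Pi.smul_apply, smul_eq_mul] at this
    exact (mul_eq_zero.mp this).resolve_right hvk
  rw [← sum_dotProduct_smul_of_orthonormal horth y]
  simp [hcoeff]

end Spectral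

section WaveEquation

theorem eqOn_zero_of_hasDerivAt_of_eqOn_zero {E : Type*} [NormedAddCommGroup E] [NormedSpace ℝ E]
    {s : Set ℝ} (hs : IsOpen s) {f f' : ℝ → E} (hf : ∀ t ∈ s, HasDerivAt f (f' t) t)
    (h0 : ∀ t ∈ s, f t = 0) : ∀ t ∈ s, f' t = 0 := fun t ht =>
  (hf t ht).unique <| (hasDerivAt_const t 0).congr_of_eventuallyEq <|
    Filter.eventually_of_mem (hs.mem_nhds ht) h0

theorem HasDerivAt.matrix_mulVec {m n : Type*} [Fintype m] [Fintype n] (A : Matrix m n ℝ)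
    {X : ℝ → n → ℝ} {X' : n → ℝ} {t : ℝ} (h : HasDerivAt X X' t) :
    HasDerivAt (fun s => A *ᵥ X s) (A *ᵥ X') t :=
  (LinearMap.toContinuousLinearMap (mulVecLin A)).hasFDerivAt.comp_hasDerivAt t h

variable {ι : Type*} [Fintype ι] [DecidableEq ι] {A : Matrix ι ι ℝ} {s : Set ℝ}

theorem pow_mulVec_apply_eq_zero_of_hasDerivAt (hs : IsOpen s) {X X' X'' : ℝ → ι → ℝ}
    (hX : ∀ t ∈ s, HasDerivAt X (X' t) t) (hX' : ∀ t ∈ s, HasDerivAt X' (X'' t) t)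
    (hode : ∀ t ∈ s, X'' t = A *ᵥ X t) {k : ι} (hk : ∀ t ∈ s, X t k = 0) (j : ℕ) :
    ∀ t ∈ s, (A ^ j *ᵥ X t) k = 0 := by
  induction j generalizing X X' X'' with
  | zero => simpa using hk
  | succ j ih =>
    -- `A X` solves the same equation, and its `k`-th coordinate is `x_k''`, which vanishes on `s`.
    have hk' : ∀ t ∈ s, X' t k = 0 := eqOn_zero_of_hasDerivAt_of_eqOn_zero hs
      (fun t ht => hasDerivAt_pi.mp (hX t ht) k) hk
    have hk'' : ∀ t ∈ s, X'' t k = 0 := eqOn_zero_of_hasDerivAt_of_eqOn_zero hs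
      (fun t ht => hasDerivAt_pi.mp (hX' t ht) k) hk'
    intro t ht
    rw [pow_succ, ← mulVec_mulVec]
    refine ih (X := fun t => A *ᵥ X t) (X' := fun t => A *ᵥ X' t) (X'' := fun t => A *ᵥ X'' t)
      (fun t ht => (hX t ht).matrix_mulVec A) (fun t ht => (hX' t ht).matrix_mulVec A)
      (fun t ht => by rw [hode t ht]) (fun t ht => ?_) t ht
    rw [← hode t ht, hk'' t ht]

end WaveEquation

theorem ContinuousOn.eq_zero_right_of_eqOn_Ioo {E : Type*} [TopologicalSpace E] [T2Space E]
    [Zero E] {a b : ℝ} (hab : a < b) {f : ℝ → E} (hf : ContinuousOn f (Icc a b))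
    (h0 : ∀ t ∈ Ioo a b, f t = 0) : f b = 0 :=
  Set.EqOn.of_subset_closure (f := f) (g := 0) h0 hf continuousOn_const Ioo_subset_Icc_self
    (closure_Ioo hab.ne).ge (right_mem_Icc.mpr hab.le)

/-- **Lemma 2.2.** Let `0 ≤ T* < T` and let `X : [T*, T] → ℝ^N` be twice continuously
differentiable with `Ẍ(t) = Δ X(t)` on `(T*, T)`.  If `K` is a strategic set of nodes and
`x_k(t) = 0` for all `t ∈ (T*, T)` and all `k ∈ K`, then `X(T) = 0` and `Ẋ(T) = 0`. -/
theorem strategic_null_state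
    {N : ℕ} (hN : 2 ≤ N)
    (Δ : Matrix (Fin N) (Fin N) ℝ)
    (ω : Fin N → ℝ) (v : Fin N → Fin N → ℝ)
    (hω0 : ω ⟨0, by omega⟩ = 0) (hωmono : StrictMono ω)
    (horth : ∀ n m : Fin N, v n ⬝ᵥ v m = if n = m then 1 else 0)
    (heig : ∀ n : Fin N, Δ.mulVec (v n) = (-(ω n) ^ 2) • v n)
    (Tstar T : ℝ) (hTT : Tstar < T)
    (X X' X'' : ℝ → Fin N → ℝ)
    (hd1 : ∀ t ∈ Icc Tstar T, HasDerivAt X (X' t) t)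
    (hd2 : ∀ t ∈ Icc Tstar T, HasDerivAt X' (X'' t) t)
    (hode : ∀ t ∈ Ioo Tstar T, X'' t = Δ.mulVec (X t))
    (K : Finset (Fin N)) (hstrat : ∀ n : Fin N, ∃ k ∈ K, v n k ≠ 0)
    (hzero : ∀ k ∈ K, ∀ t ∈ Ioo Tstar T, X t k = 0) :
    X T = 0 ∧ X' T = 0 := by
  have hω_nonneg : ∀ n, 0 ≤ ω n := fun n => hω0 ▸ hωmono.monotone (Nat.zero_le n.val)
  have hμ : Function.Injective fun n => -ω n ^ 2 := fun n m h =>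
    hωmono.injective <| (pow_left_inj₀ (hω_nonneg n) (hω_nonneg m) two_ne_zero).mp (neg_inj.mp h)
  have hX1 : ∀ t ∈ Ioo Tstar T, HasDerivAt X (X' t) t := fun t ht =>
    hd1 t (Ioo_subset_Icc_self ht)
  have hX2 : ∀ t ∈ Ioo Tstar T, HasDerivAt X' (X'' t) t := fun t ht =>
    hd2 t (Ioo_subset_Icc_self ht)
  have hX : ∀ t ∈ Ioo Tstar T, X t = 0 := fun t ht =>
    eq_zero_of_pow_mulVec_apply_eq_zero horth heig hμ hstrat fun j k hk =>
      pow_mulVec_apply_eq_zero_of_hasDerivAt isOpen_Ioo hX1 hX2 hode (hzero k hk) j t ht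
  have hX' : ∀ t ∈ Ioo Tstar T, X' t = 0 := eqOn_zero_of_hasDerivAt_of_eqOn_zero isOpen_Ioo hX1 hX
  have hXcont : ContinuousOn X (Icc Tstar T) := fun t ht =>
    (hd1 t ht).continuousAt.continuousWithinAt
  have hX'cont : ContinuousOn X' (Icc Tstar T) := fun t ht =>
    (hd2 t ht).continuousAt.continuousWithinAt
  exact ⟨hXcont.eq_zero_right_of_eqOn_Ioo hTT hX, hX'cont.eq_zero_right_of_eqOn_Ioo hTT hX'⟩
end

section
/- Let A be a real symmetric N×N matrix and let 1 < k < N be such that A_{ab} = 0 whenever a ≤ k−1 and b ≥ k+1. Choose two distinct column indices i, j with i, j ≤ k and two distinct row indices p, q with p, q ≥ k. Then the (N−2)×(N−2) matrix obtained from A by deleting columns i and j and rows p and q has determinant zero, i.e. is singular. (Theorem 4.4) -/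
open Matrix Finset

/-- A matrix with a big zero block is singular. -/
lemma det_zero_of_block {ι : Type*} [DecidableEq ι] [Fintype ι] (M : Matrix ι ι ℝ)
    (S T : Finset ι) (hcard : Fintype.card ι < S.card + T.card)
    (h0 : ∀ r ∈ S, ∀ c ∈ T, M r c = 0) : M.det = 0 := by
  rw [Matrix.det_apply]
  refine Finset.sum_eq_zero fun σ _ => ?_
  have : ∃ x ∈ T, σ x ∈ S := by
    by_contra hc
    push_neg at hc
    have himg : T.image σ ⊆ univ \ S := by
      intro a ha
      simp only [Finset.mem_image] at ha
      obtain ⟨x, hx, rfl⟩ := ha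
      simp [hc x hx]
    have h1 : T.card ≤ (univ \ S).card := by
      rw [← Finset.card_image_of_injective T σ.injective]
      exact Finset.card_le_card himg
    rw [Finset.card_sdiff_of_subset (Finset.subset_univ S), Finset.card_univ] at h1
    have h2 : S.card ≤ Fintype.card ι := by
      simpa using Finset.card_le_univ S
    omega
  obtain ⟨x, hxT, hxS⟩ := this
  have h1 : (∏ i : ι, M (σ i) i) = 0 :=
    Finset.prod_eq_zero (f := fun i => M (σ i) i) (Finset.mem_univ x) (h0 _ hxS _ hxT)
  rw [h1, smul_zero]

/-- **Theorem 4.4.** For a symmetric matrix `A` with a "joint" at node `k`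
(`A a b = 0` whenever `a < k < b`), deleting two columns `i, j ≤ k` and two rows
`p, q ≥ k` yields a singular `(N−2)×(N−2)` matrix: its determinant (computed via any
identification of its row and column index sets) is zero. -/
theorem joint_submatrix_singular
    {N : ℕ} (A : Matrix (Fin N) (Fin N) ℝ) (hsymm : A.IsSymm)
    (k : Fin N) (hk0 : 0 < (k : ℕ)) (hkN : (k : ℕ) < N - 1)
    (hjoint : ∀ a b : Fin N, a < k → k < b → A a b = 0)
    (i j : Fin N) (hij : i ≠ j) (hik : i ≤ k) (hjk : j ≤ k)
    (p q : Fin N) (hpq : p ≠ q) (hpk : k ≤ p) (hqk : k ≤ q) :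
    ∀ e : {r : Fin N // r ≠ p ∧ r ≠ q} ≃ {c : Fin N // c ≠ i ∧ c ≠ j},
      (A.submatrix (Subtype.val : {r : Fin N // r ≠ p ∧ r ≠ q} → Fin N)
        (fun r => ((e r : {c : Fin N // c ≠ i ∧ c ≠ j}) : Fin N))).det = 0 := by
  intro e
  set S : Finset {r : Fin N // r ≠ p ∧ r ≠ q} := univ.filter (fun r => (r : Fin N) < k) with hS
  set T : Finset {r : Fin N // r ≠ p ∧ r ≠ q} := univ.filter (fun c => k < ((e c : {c : Fin N // c ≠ i ∧ c ≠ j}) : Fin N)) with hT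
  have hSval : S.image Subtype.val = Finset.Iio k := by
    ext a
    simp only [hS, Finset.mem_image, Finset.mem_filter, Finset.mem_univ, true_and,
      Finset.mem_Iio]
    constructor
    · rintro ⟨x, hx, rfl⟩; exact hx
    · intro ha
      exact ⟨⟨a, fun h => absurd (h ▸ ha) (not_lt.2 hpk),
        fun h => absurd (h ▸ ha) (not_lt.2 hqk)⟩, ha, rfl⟩
  have hScard : S.card = (k : ℕ) := by
    rw [← Fin.card_Iio k, ← hSval, Finset.card_image_of_injective _ Subtype.val_injective]
  have hTval : T.image (fun c => ((e c : {c : Fin N // c ≠ i ∧ c ≠ j}) : Fin N)) = Finset.Ioi k := by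
    ext a
    simp only [hT, Finset.mem_image, Finset.mem_filter, Finset.mem_univ, true_and,
      Finset.mem_Ioi]
    constructor
    · rintro ⟨x, hx, rfl⟩; exact hx
    · intro ha
      refine ⟨e.symm ⟨a, fun h => absurd (h ▸ ha) (not_lt.2 hik),
        fun h => absurd (h ▸ ha) (not_lt.2 hjk)⟩, ?_, ?_⟩ <;> simp [ha]
  have hTcard : T.card = N - 1 - (k : ℕ) := by
    rw [← Fin.card_Ioi k, ← hTval, Finset.card_image_of_injective _
      (fun a b h => e.injective (Subtype.val_injective h))]
  have hcardι : Fintype.card {r : Fin N // r ≠ p ∧ r ≠ q} = N - 2 := by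
    rw [Fintype.card_subtype]
    have : (univ.filter (fun r : Fin N => r ≠ p ∧ r ≠ q)) = univ \ {p, q} := by
      ext a; simp [and_comm]
    rw [this, Finset.card_sdiff_of_subset (Finset.subset_univ _), Finset.card_univ, Fintype.card_fin,
      Finset.card_pair hpq]
  refine det_zero_of_block _ S T ?_ ?_
  · have hkN' : (k : ℕ) < N := k.isLt
    rw [hcardι, hScard, hTcard]; omega
  · intro r hr c hc
    simp only [hS, hT, Finset.mem_filter] at hr hc
    exact hjoint _ _ hr.2 hc.2
end

section
/- Let N ≥ 3 and let M be a real N×(N−2) matrix such that for every pair of distinct rows p, q, the (N−2)×(N−2) matrix obtained from M by deleting rows p and q is invertible. If x ∈ ℝ^{N−2} and v ∈ ℝ^N has at most two nonzero components and M x = v, then x = 0 and v = 0. -/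
open Matrix

/-- Linear-algebra core of the identifiability proof: if every square matrix obtained from the
`N×(N−2)` matrix `M` by deleting two rows is invertible, and `M x = v` where `v` has at most two
nonzero components, then `x = 0` and `v = 0`. -/
theorem overdetermined_system_trivial
    {N : ℕ} (hN : 3 ≤ N) (M : Matrix (Fin N) (Fin (N - 2)) ℝ)
    (hsub : ∀ p q : Fin N, p ≠ q →
      Function.Bijective
        ((M.submatrix (Subtype.val : {r : Fin N // r ≠ p ∧ r ≠ q} → Fin N) id).mulVec))
    (x : Fin (N - 2) → ℝ) (w : Fin N → ℝ)
    (hw : ∃ a b : Fin N, ∀ c : Fin N, c ≠ a → c ≠ b → w c = 0)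
    (hMx : M.mulVec x = w) :
    x = 0 ∧ w = 0 := by
  obtain ⟨a, b, hab⟩ := hw
  have : Nontrivial (Fin N) := Fin.nontrivial_iff_two_le.mpr (by omega)
  -- choose two distinct indices p, q outside of which w vanishes
  obtain ⟨p, q, hpq, hz⟩ : ∃ p q : Fin N, p ≠ q ∧ ∀ c, c ≠ p → c ≠ q → w c = 0 := by
    by_cases hba : b = a
    · obtain ⟨q, hq⟩ := exists_ne a
      exact ⟨a, q, fun h => hq h.symm, fun c hc _ => hab c hc (hba ▸ hc)⟩
    · exact ⟨a, b, fun h => hba h.symm, fun c hc hc' => hab c hc hc'⟩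
  have hinj := (hsub p q hpq).injective
  have h0 : (M.submatrix (Subtype.val : {r : Fin N // r ≠ p ∧ r ≠ q} → Fin N) id).mulVec x = 0 := by
    funext r
    have : M.mulVec x r.val = w r.val := congrFun hMx r.val
    have hw0 : w r.val = 0 := hz r.val r.2.1 r.2.2
    simpa [Matrix.mulVec, Matrix.submatrix_apply, hw0] using this
  have hx : x = 0 := by
    apply hinj
    rw [h0, Matrix.mulVec_zero]
  subst hx
  refine ⟨rfl, ?_⟩
  rw [← hMx, Matrix.mulVec_zero]
end
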